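/- arXiv:1011.1701 — 3 statements merged into one kernel-verified Lean document; each statement's English description precedes it below -/
import Mathlib

section
/- Under the variable–variable and variable–check blocks of covariance evolution with their initial conditions, for all y ∈ (0,1] the quantity A^{(l_Σ,r_{d_c})} := Σ_{k∈L} (1/k) δ^{l_k,r_{d_c}}, where δ^{l_k,r_{d_c}} := δ^{l_k,l_Σ} − Σ_{j∈R̄} δ^{l_k,r_j}, satisfies A^{(l_Σ,r_{d_c})} = ε ε̃ Σ_{i∈L} (λ_i/i)(y^i − 1) · (x'/x) G_{d_c} − ε̃ x G_{d_c}, where G_{d_c} := −d_c r̂_{d_c}/x. (Identity used as the induction basis in the proof of Lemma 2.) -/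
/-!
Each quantity involved is pinned down by a linear ODE on `[y₀, 1]` together with its value at
`y = 1`, so it is enough to exhibit a closed form solving the same initial value problem
(Grönwall uniqueness, run backwards from `y = 1`).

First, `δ^{l_k,l_s} - δ^{l_s,l_k}` solves `f' = (k + s) f / y` and vanishes at `1`, so the
variable–variable block is symmetric. By symmetry the weighted row sums
`β_k = Σ_s δ^{l_k,l_s} / s` satisfy the closed system `β_k' = (k/y) β_k - (k l̂_k / (e y)) Σ_t β_t`,
solved by `ε ε̃ λ_k y^k (1 - k Φ / (y λ(y)))` with `Φ = Σ_i (λ_i / i)(y^i - 1)`. Finally, summing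
the variable–check equations over `j` telescopes (`Σ_{j < d_c} G_j = -G_{d_c} - y`), the terms
carrying `a` cancel because `a e = Σ_k k l̂_k`, and `A = A^{(l_Σ,r_{d_c})}` obeys
`A' = d_c (x'/x) A + 2 (x'/e) G_{d_c} Σ β - (G_{d_c} / y²) Σ (t - 1) β_t`, which
`d_c ρ_{d_c} x^{d_c - 2} (ε̃ x² - ε ε̃ Φ x')` also solves.
-/

open Finset

namespace LDPC

/-- λ(y) = Σ_{k∈L} λ_k y^{k-1} -/
noncomputable def lamP (L : Finset ℕ) (lam : ℕ → ℝ) (y : ℝ) : ℝ :=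
  ∑ k ∈ L, lam k * y ^ (k - 1)

/-- λ'(y) = Σ_{k∈L} (k-1) λ_k y^{k-2} -/
noncomputable def lamD (L : Finset ℕ) (lam : ℕ → ℝ) (y : ℝ) : ℝ :=
  ∑ k ∈ L, ((k : ℝ) - 1) * lam k * y ^ (k - 2)

/-- λ''(y) = Σ_{k∈L} (k-1)(k-2) λ_k y^{k-3} -/
noncomputable def lamDD (L : Finset ℕ) (lam : ℕ → ℝ) (y : ℝ) : ℝ :=
  ∑ k ∈ L, ((k : ℝ) - 1) * ((k : ℝ) - 2) * lam k * y ^ (k - 3)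

/-- ρ(z) = Σ_{k∈R} ρ_k z^{k-1} -/
noncomputable def rhoP (R : Finset ℕ) (rho : ℕ → ℝ) (z : ℝ) : ℝ :=
  ∑ k ∈ R, rho k * z ^ (k - 1)

/-- ρ'(z) = Σ_{k∈R} (k-1) ρ_k z^{k-2} -/
noncomputable def rhoD (R : Finset ℕ) (rho : ℕ → ℝ) (z : ℝ) : ℝ :=
  ∑ k ∈ R, ((k : ℝ) - 1) * rho k * z ^ (k - 2)

/-- x = ελ(y) -/
noncomputable def xF (L : Finset ℕ) (lam : ℕ → ℝ) (ε y : ℝ) : ℝ := ε * lamP L lam y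

/-- x' = ελ'(y) -/
noncomputable def xD (L : Finset ℕ) (lam : ℕ → ℝ) (ε y : ℝ) : ℝ := ε * lamD L lam y

/-- x'' = ελ''(y) -/
noncomputable def xDD (L : Finset ℕ) (lam : ℕ → ℝ) (ε y : ℝ) : ℝ := ε * lamDD L lam y

/-- e = xy -/
noncomputable def eF (L : Finset ℕ) (lam : ℕ → ℝ) (ε y : ℝ) : ℝ := xF L lam ε y * y

/-- a = (x'y + x)/x -/
noncomputable def aF (L : Finset ℕ) (lam : ℕ → ℝ) (ε y : ℝ) : ℝ :=
  (xD L lam ε y * y + xF L lam ε y) / xF L lam ε y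

/-- l̂_k(y) = ε λ_k y^k -/
noncomputable def lhat (lam : ℕ → ℝ) (ε : ℝ) (k : ℕ) (y : ℝ) : ℝ := ε * lam k * y ^ k

/-- r̂_j(y); for j = 1 the special formula x(y-1+ρ(1-x)), else Σ_{i∈R} ρ_i C(i-1,j-1) x^j (1-x)^{i-j}. -/
noncomputable def rhat (L R : Finset ℕ) (lam rho : ℕ → ℝ) (ε : ℝ) (j : ℕ) (y : ℝ) : ℝ :=
  if j = 1 then xF L lam ε y * (y - 1 + rhoP R rho (1 - xF L lam ε y))
  else ∑ i ∈ R, rho i * ((i - 1).choose (j - 1) : ℝ) * xF L lam ε y ^ j *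
    (1 - xF L lam ε y) ^ (i - j)

/-- G_j(y) = j(r̂_{j+1} - r̂_j)/x for j ≤ d_c - 1, and G_{d_c}(y) = -d_c r̂_{d_c}/x. -/
noncomputable def Gf (L R : Finset ℕ) (lam rho : ℕ → ℝ) (ε : ℝ) (dc j : ℕ) (y : ℝ) : ℝ :=
  if j = dc then -((dc : ℝ) * rhat L R lam rho ε dc y) / xF L lam ε y
  else (j : ℝ) * (rhat L R lam rho ε (j + 1) y - rhat L R lam rho ε j y) / xF L lam ε y

/-- F(y) = Σ_{k∈L} (λ_k/k)[ε²(y^k-1)² + ε(y^k-1)] -/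
noncomputable def Ff (L : Finset ℕ) (lam : ℕ → ℝ) (ε y : ℝ) : ℝ :=
  ∑ k ∈ L, lam k / (k : ℝ) * (ε ^ 2 * (y ^ k - 1) ^ 2 + ε * (y ^ k - 1))

/-- F'(y) = 2Σ_{k∈L} ε²λ_k y^{2k-1} - (ε - ε̃)x -/
noncomputable def Fd (L : Finset ℕ) (lam : ℕ → ℝ) (ε y : ℝ) : ℝ :=
  2 * ∑ k ∈ L, ε ^ 2 * lam k * y ^ (2 * k - 1) - (ε - (1 - ε)) * xF L lam ε y

/-- V_{i,j}(y) = Σ_{s∈R} sρ_s C(s-1,i-1)C(s-1,j-1) x^{i+j} (1-x)^{2s-i-j} -/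
noncomputable def Vf (L R : Finset ℕ) (lam rho : ℕ → ℝ) (ε : ℝ) (i j : ℕ) (y : ℝ) : ℝ :=
  ∑ s ∈ R, (s : ℝ) * rho s * ((s - 1).choose (i - 1) : ℝ) * ((s - 1).choose (j - 1) : ℝ) *
    xF L lam ε y ^ (i + j) * (1 - xF L lam ε y) ^ (2 * s - i - j)

/-- The variable–variable block of covariance evolution, with its initial conditions. -/
def CEvv (L : Finset ℕ) (lam : ℕ → ℝ) (ε : ℝ) (δll : ℕ → ℕ → ℝ → ℝ) : Prop :=
  (∀ k ∈ L, ∀ s ∈ L, ∀ y ∈ Set.Ioc (0 : ℝ) 1,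
    HasDerivWithinAt (δll k s)
      (-(xF L lam ε y) *
          (((s : ℝ) * lhat lam ε s y / eF L lam ε y ^ 2) * ∑ t ∈ L, δll k t y
            + ((k : ℝ) * lhat lam ε k y / eF L lam ε y ^ 2) * ∑ t ∈ L, δll s t y
            - (((k : ℝ) + (s : ℝ)) / eF L lam ε y) * δll k s y)
        - xF L lam ε y * (k : ℝ) * (s : ℝ) * (lhat lam ε k y / eF L lam ε y) *
            ((if k = s then (1 : ℝ) else 0) - lhat lam ε s y / eF L lam ε y))
      (Set.Ioc 0 1) y)
  ∧ ∀ k ∈ L, ∀ s ∈ L,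
      δll k s 1 = (if k = s then (1 : ℝ) else 0) * (k : ℝ) * lam k * ε * (1 - ε)

/-- The variable–check block of covariance evolution, with its initial conditions. -/
def CEvc (L R : Finset ℕ) (lam rho : ℕ → ℝ) (ε : ℝ) (dc : ℕ)
    (δll δlr : ℕ → ℕ → ℝ → ℝ) : Prop :=
  (∀ k ∈ L, ∀ j ∈ Finset.Icc 1 (dc - 1), ∀ y ∈ Set.Ioc (0 : ℝ) 1,
    HasDerivWithinAt (δlr k j)
      (2 * (xD L lam ε y / eF L lam ε y) * Gf L R lam rho ε dc j y * ∑ t ∈ L, δll k t y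
        - (Gf L R lam rho ε dc j y / y ^ 2) * ∑ i ∈ L, ((i : ℝ) - 1) * δll k i y
        - xF L lam ε y * (aF L lam ε y - (k : ℝ)) * ((k : ℝ) * lhat lam ε k y / eF L lam ε y)
            * (Gf L R lam rho ε dc j y / y)
        - ((k : ℝ) * lhat lam ε k y / (eF L lam ε y * y)) * ∑ t ∈ L, δlr t j y
        + ((k : ℝ) / y) * δlr k j y
        - (j : ℝ) * (xD L lam ε y / xF L lam ε y) *
            ((if j + 1 = dc then
                (∑ t ∈ L, δll k t y) - ∑ j' ∈ Finset.Icc 1 (dc - 1), δlr k j' y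
              else δlr k (j + 1) y) - δlr k j y))
      (Set.Ioc 0 1) y)
  ∧ ∀ k ∈ L, ∀ j ∈ Finset.Icc 1 (dc - 1),
      δlr k j 1 = -((k : ℝ) * lam k * ε * (1 - ε)) * Gf L R lam rho ε dc j 1

/-- The check–check block of covariance evolution, with symmetry and initial conditions. -/
def CErr (L R : Finset ℕ) (lam rho : ℕ → ℝ) (ε : ℝ) (dc : ℕ)
    (δlr δrr : ℕ → ℕ → ℝ → ℝ) : Prop :=
  (∀ i ∈ Finset.Icc 1 (dc - 1), ∀ j ∈ Finset.Icc 1 (dc - 1), ∀ y ∈ Set.Ioc (0 : ℝ) 1,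
      δrr i j y = δrr j i y)
  ∧ (∀ i ∈ Finset.Icc 1 (dc - 1), ∀ j ∈ Finset.Icc 1 (dc - 1), ∀ y ∈ Set.Ioc (0 : ℝ) 1,
    HasDerivWithinAt (δrr i j)
      (-(xD L lam ε y / xF L lam ε y) *
          ((i : ℝ) * (if i + 1 = dc then
                (∑ k ∈ L, δlr k j y) - ∑ i' ∈ Finset.Icc 1 (dc - 1), δrr i' j y
              else δrr (i + 1) j y)
            + (j : ℝ) * (if j + 1 = dc then
                (∑ k ∈ L, δlr k i y) - ∑ i' ∈ Finset.Icc 1 (dc - 1), δrr i' i y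
              else δrr (j + 1) i y)
            - ((i : ℝ) + (j : ℝ)) * δrr i j y)
        + (∑ k ∈ L, ((2 * aF L lam ε y - (k : ℝ) - 1) / y ^ 2) *
            (δlr k j y * Gf L R lam rho ε dc i y + δlr k i y * Gf L R lam rho ε dc j y))
        - xF L lam ε y *
            (((xDD L lam ε y * xF L lam ε y - xD L lam ε y ^ 2) / xF L lam ε y ^ 2) *
                Gf L R lam rho ε dc i y * Gf L R lam rho ε dc j y
              + (i : ℝ) * (j : ℝ) * (xD L lam ε y / xF L lam ε y ^ 2) *
                  ((if i = j then rhat L R lam rho ε (j + 1) y + rhat L R lam rho ε j y else 0)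
                    - (if i = j + 1 then rhat L R lam rho ε i y else 0)
                    - (if j = i + 1 then rhat L R lam rho ε j y else 0))))
      (Set.Ioc 0 1) y)
  ∧ ∀ i ∈ Finset.Icc 1 (dc - 1), ∀ j ∈ Finset.Icc 1 (dc - 1),
      δrr i j 1 = (if i = j then (i : ℝ) * rhat L R lam rho ε i 1 else 0)
        - Vf L R lam rho ε i j 1
        + (∑ k ∈ L, ((k : ℝ) - 1) * lam k) * ε * (1 - ε) *
            Gf L R lam rho ε dc i 1 * Gf L R lam rho ε dc j 1

end LDPC

section LinearODE

open Set

variable {ι : Type*} [Fintype ι]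

lemma lipschitzWith_sum_mul (A : ι → ι → ℝ) :
    LipschitzWith (Fintype.card ι * ‖A‖₊) fun (z : ι → ℝ) i => ∑ j, A i j * z j := by
  refine LipschitzWith.of_dist_le_mul fun z w => ?_
  refine (dist_pi_le_iff (by positivity)).2 fun i => ?_
  rw [Real.dist_eq, ← Finset.sum_sub_distrib]
  calc |∑ j, (A i j * z j - A i j * w j)| ≤ ∑ j, |A i j| * |z j - w j| := by
        simpa only [← mul_sub, abs_mul] using
          Finset.abs_sum_le_sum_abs (fun j => A i j * (z j - w j)) Finset.univ
    _ ≤ ∑ _j : ι, ‖A‖ * dist z w := by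
        gcongr with j
        · exact (norm_le_pi_norm (A i) j).trans (norm_le_pi_norm A i)
        · exact dist_le_pi_dist z w j
    _ = _ := by simp [mul_assoc]

theorem eqOn_zero_of_hasDerivWithinAt_sum_mul {a b : ℝ} {c : ℝ → ι → ι → ℝ}
    (hc : ContinuousOn c (Icc a b)) {f : ℝ → ι → ℝ}
    (hf : ∀ t ∈ Icc a b, HasDerivWithinAt f (fun i => ∑ j, c t i j * f t j) (Icc a b) t)
    (hb : f b = 0) : EqOn f 0 (Icc a b) := by
  obtain ⟨C, hC⟩ := isCompact_Icc.exists_bound_of_continuousOn hc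
  have hlip : ∀ t ∈ Ioc a b, LipschitzOnWith (Fintype.card ι * C.toNNReal)
      (fun (z : ι → ℝ) i => ∑ j, c t i j * z j) univ := fun t ht =>
    ((lipschitzWith_sum_mul (c t)).weaken (by
      gcongr
      exact NNReal.coe_le_coe.1 ((hC t (Ioc_subset_Icc_self ht)).trans (le_max_left _ _)))
      ).lipschitzOnWith
  refine ODE_solution_unique_of_mem_Icc_left hlip (HasDerivWithinAt.continuousOn hf)
    (fun t ht => ?_) (fun _ _ => mem_univ _) continuousOn_const (fun t _ => ?_)
    (fun _ _ => mem_univ _) hb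
  · exact (hf t (Ioc_subset_Icc_self ht)).mono_of_mem_nhdsWithin
      (Icc_mem_nhdsLE_of_mem ⟨ht.1, ht.2⟩)
  · convert hasDerivWithinAt_const t (Iic t) (0 : ι → ℝ) using 1 <;> ext <;> simp

theorem eqOn_zero_of_hasDerivWithinAt_mul {a b : ℝ} {c f : ℝ → ℝ}
    (hc : ContinuousOn c (Icc a b))
    (hf : ∀ t ∈ Icc a b, HasDerivWithinAt f (c t * f t) (Icc a b) t)
    (hb : f b = 0) : EqOn f 0 (Icc a b) := by
  have key := eqOn_zero_of_hasDerivWithinAt_sum_mul (ι := Unit) (c := fun t _ _ => c t)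
    (f := fun t _ => f t) (continuousOn_pi.2 fun _ => continuousOn_pi.2 fun _ => hc)
    (fun t ht => hasDerivWithinAt_pi.2 fun _ => by simpa using hf t ht) (funext fun _ => hb)
  exact fun t ht => congrFun (key ht) ()

theorem eqOn_zero_of_hasDerivWithinAt_diag_sub_sum {a b : ℝ} {d w : ι → ℝ → ℝ}
    (hd : ∀ i, ContinuousOn (d i) (Icc a b)) (hw : ∀ i, ContinuousOn (w i) (Icc a b))
    {f : ℝ → ι → ℝ}
    (hf : ∀ t ∈ Icc a b,
      HasDerivWithinAt f (fun i => d i t * f t i - w i t * ∑ j, f t j) (Icc a b) t)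
    (hb : f b = 0) : EqOn f 0 (Icc a b) := by
  classical
  refine eqOn_zero_of_hasDerivWithinAt_sum_mul
    (c := fun t i j => (if j = i then d i t else 0) - w i t)
    (continuousOn_pi.2 fun i => continuousOn_pi.2 fun j => ?_) (fun t ht => ?_) hb
  · split_ifs
    · exact (hd i).sub (hw i)
    · exact continuousOn_const.sub (hw i)
  · convert hf t ht using 2 with i
    simp [sub_mul, Finset.sum_sub_distrib, Finset.mul_sum]

end LinearODE

section FiniteSums

variable {K : Type*} [CommRing K]

lemma sum_mul_sum_mul_of_symm {α : Type*} {s : Finset α} {M : α → α → K}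
    (hM : ∀ i ∈ s, ∀ j ∈ s, M i j = M j i) (a b : α → K) :
    ∑ i ∈ s, a i * ∑ j ∈ s, b j * M i j = ∑ j ∈ s, b j * ∑ i ∈ s, a i * M j i := by
  simp only [Finset.mul_sum]
  rw [Finset.sum_comm]
  exact Finset.sum_congr rfl fun j hj => Finset.sum_congr rfl fun i hi => by
    rw [hM i hi j hj]; ring

lemma sum_Icc_natCast_mul_sub (g : ℕ → K) (n : ℕ) :
    ∑ j ∈ Finset.Icc 1 n, (j : K) * (g (j + 1) - g j)
      = n * g (n + 1) - ∑ j ∈ Finset.Icc 1 n, g j := by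
  induction n with
  | zero => simp
  | succ n ih =>
    rw [Finset.sum_Icc_succ_top (by omega), Finset.sum_Icc_succ_top (by omega), ih]
    push_cast
    ring

lemma sum_Icc_choose_mul_pow {i n : ℕ} (hi : 1 ≤ i) (hin : i ≤ n) (x : K) :
    ∑ j ∈ Finset.Icc 1 n, ((i - 1).choose (j - 1) : K) * x ^ j * (1 - x) ^ (i - j) = x := by
  obtain ⟨p, rfl⟩ : ∃ p, i = p + 1 := ⟨i - 1, by omega⟩
  have hbinom := (add_pow x (1 - x) p).symm
  rw [add_sub_cancel, one_pow] at hbinom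
  calc ∑ j ∈ Finset.Icc 1 n, ((p + 1 - 1).choose (j - 1) : K) * x ^ j * (1 - x) ^ (p + 1 - j)
      = ∑ t ∈ Finset.range n, x * (x ^ t * (1 - x) ^ (p - t) * (p.choose t : K)) := by
        rw [← Finset.Ico_add_one_right_eq_Icc, Finset.sum_Ico_eq_sum_range, Nat.add_sub_cancel]
        refine Finset.sum_congr rfl fun t _ => ?_
        rw [Nat.add_sub_cancel, Nat.add_sub_cancel_left, show p + 1 - (1 + t) = p - t by omega,
          add_comm 1 t, pow_succ]
        ring
    _ = ∑ t ∈ Finset.range (p + 1), x * (x ^ t * (1 - x) ^ (p - t) * (p.choose t : K)) := by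
        refine (Finset.sum_subset (Finset.range_subset_range.2 (by omega)) fun t _ ht => ?_).symm
        rw [Finset.mem_range, not_lt] at ht
        rw [Nat.choose_eq_zero_of_lt (by omega)]
        simp
    _ = x := by rw [← Finset.mul_sum, hbinom, mul_one]

end FiniteSums

namespace LDPC

variable {L R : Finset ℕ} {lam rho : ℕ → ℝ} {ε : ℝ}

noncomputable def phiF (L : Finset ℕ) (lam : ℕ → ℝ) (y : ℝ) : ℝ :=
  ∑ k ∈ L, lam k / (k : ℝ) * (y ^ k - 1)

lemma lamP_pos (hL : L.Nonempty) (hpos : ∀ k ∈ L, 0 < lam k) {y : ℝ} (hy : 0 < y) :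
    0 < lamP L lam y :=
  Finset.sum_pos (fun k hk => mul_pos (hpos k hk) (pow_pos hy _)) hL

lemma xF_pos (hL : L.Nonempty) (hpos : ∀ k ∈ L, 0 < lam k) (hε : 0 < ε) {y : ℝ}
    (hy : 0 < y) :
    0 < xF L lam ε y :=
  mul_pos hε (lamP_pos hL hpos hy)

lemma eF_pos (hL : L.Nonempty) (hpos : ∀ k ∈ L, 0 < lam k) (hε : 0 < ε) {y : ℝ}
    (hy : 0 < y) :
    0 < eF L lam ε y :=
  mul_pos (xF_pos hL hpos hε hy) hy

lemma lamP_one (hsum : ∑ k ∈ L, lam k = 1) : lamP L lam 1 = 1 := by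
  simpa [lamP] using hsum

lemma phiF_one : phiF L lam 1 = 0 := by
  simp [phiF]

section Moments

variable (hL2 : ∀ k ∈ L, 2 ≤ k)
include hL2

lemma sum_mul_pow (y : ℝ) : ∑ k ∈ L, lam k * y ^ k = y * lamP L lam y := by
  rw [lamP, Finset.mul_sum]
  refine Finset.sum_congr rfl fun k hk => ?_
  obtain ⟨m, rfl⟩ := Nat.exists_eq_add_of_le' (hL2 k hk)
  simp only [show m + 2 - 1 = m + 1 by omega]
  ring

lemma sum_natCast_mul_mul_pow (y : ℝ) :
    ∑ k ∈ L, (k : ℝ) * (lam k * y ^ k) = y * lamP L lam y + y ^ 2 * lamD L lam y := by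
  rw [lamP, lamD, Finset.mul_sum, Finset.mul_sum, ← Finset.sum_add_distrib]
  refine Finset.sum_congr rfl fun k hk => ?_
  obtain ⟨m, rfl⟩ := Nat.exists_eq_add_of_le' (hL2 k hk)
  simp only [Nat.add_sub_cancel, show m + 2 - 1 = m + 1 by omega]
  push_cast
  ring

lemma sum_natCast_sq_mul_mul_pow (y : ℝ) :
    ∑ k ∈ L, (k : ℝ) ^ 2 * (lam k * y ^ k)
      = y * lamP L lam y + 3 * y ^ 2 * lamD L lam y + y ^ 3 * lamDD L lam y := by
  rw [lamP, lamD, lamDD, Finset.mul_sum, Finset.mul_sum, Finset.mul_sum,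
    ← Finset.sum_add_distrib, ← Finset.sum_add_distrib]
  refine Finset.sum_congr rfl fun k hk => ?_
  obtain ⟨m, rfl⟩ := Nat.exists_eq_add_of_le' (hL2 k hk)
  rcases m with _ | m
  · norm_num
    ring
  · simp only [show m + 1 + 2 - 1 = m + 2 by omega, show m + 1 + 2 - 2 = m + 1 by omega,
      show m + 1 + 2 - 3 = m by omega]
    push_cast
    ring

lemma sum_lhat (y : ℝ) : ∑ k ∈ L, lhat lam ε k y = eF L lam ε y := by
  simp only [lhat, mul_assoc, ← Finset.mul_sum, sum_mul_pow hL2, eF, xF]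
  ring

lemma sum_natCast_mul_lhat (y : ℝ) :
    ∑ k ∈ L, (k : ℝ) * lhat lam ε k y = eF L lam ε y + y ^ 2 * xD L lam ε y := by
  have hterm : ∀ k : ℕ, (k : ℝ) * lhat lam ε k y = ε * ((k : ℝ) * (lam k * y ^ k)) :=
    fun k => by unfold lhat; ring
  simp only [hterm, ← Finset.mul_sum, sum_natCast_mul_mul_pow hL2, eF, xF, xD]
  ring

lemma hasDerivAt_lamP (y : ℝ) : HasDerivAt (lamP L lam) (lamD L lam y) y := by
  unfold lamP lamD
  refine HasDerivAt.fun_sum fun k hk => ?_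
  obtain ⟨m, rfl⟩ := Nat.exists_eq_add_of_le' (hL2 k hk)
  simp only [Nat.add_sub_cancel, show m + 2 - 1 = m + 1 by omega]
  exact ((hasDerivAt_pow (m + 1) y).const_mul _).congr_deriv (by push_cast; ring)

lemma hasDerivAt_lamD (y : ℝ) : HasDerivAt (lamD L lam) (lamDD L lam y) y := by
  unfold lamD lamDD
  refine HasDerivAt.fun_sum fun k hk => ?_
  obtain ⟨m, rfl⟩ := Nat.exists_eq_add_of_le' (hL2 k hk)
  simp only [Nat.add_sub_cancel]
  rcases m with _ | m
  · simpa using hasDerivAt_const y _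
  · simp only [show m + 1 + 2 - 3 = m by omega]
    exact ((hasDerivAt_pow (m + 1) y).const_mul _).congr_deriv (by push_cast; ring)

lemma hasDerivAt_xF (y : ℝ) : HasDerivAt (xF L lam ε) (xD L lam ε y) y :=
  (hasDerivAt_lamP hL2 y).const_mul ε

lemma hasDerivAt_xD (y : ℝ) : HasDerivAt (xD L lam ε) (xDD L lam ε y) y :=
  (hasDerivAt_lamD hL2 y).const_mul ε

lemma continuous_xF : Continuous (xF L lam ε) :=
  continuous_iff_continuousAt.2 fun y => (hasDerivAt_xF hL2 y).continuousAt

lemma continuous_xD : Continuous (xD L lam ε) :=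
  continuous_iff_continuousAt.2 fun y => (hasDerivAt_xD hL2 y).continuousAt

lemma hasDerivAt_phiF (y : ℝ) : HasDerivAt (phiF L lam) (lamP L lam y) y := by
  unfold phiF lamP
  refine HasDerivAt.fun_sum fun k hk => ?_
  obtain ⟨m, rfl⟩ := Nat.exists_eq_add_of_le' (hL2 k hk)
  refine (((hasDerivAt_pow (m + 2) y).sub_const 1).const_mul _).congr_deriv ?_
  simp only [show m + 2 - 1 = m + 1 by omega]
  field_simp

end Moments

lemma rhat_eq_ite_add_sum (j : ℕ) (y : ℝ) :
    rhat L R lam rho ε j y = (if j = 1 then xF L lam ε y * (y - 1) else 0)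
      + ∑ i ∈ R, rho i * (((i - 1).choose (j - 1) : ℝ) * xF L lam ε y ^ j
          * (1 - xF L lam ε y) ^ (i - j)) := by
  split_ifs with hj
  · subst hj
    rw [rhat, if_pos rfl, rhoP, mul_add, Finset.mul_sum]
    congr 1
    refine Finset.sum_congr rfl fun i _ => ?_
    simp only [Nat.sub_self, Nat.choose_zero_right, Nat.cast_one, pow_one]
    ring
  · simp only [rhat, if_neg hj, zero_add, mul_assoc]

section CheckDegrees

variable {dc : ℕ} (hR2 : ∀ k ∈ R, 2 ≤ k) (hdc : IsGreatest (R : Set ℕ) dc)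
include hR2 hdc

lemma rhat_dc_eq (y : ℝ) : rhat L R lam rho ε dc y = rho dc * xF L lam ε y ^ dc := by
  have hdc2 := hR2 dc hdc.1
  rw [rhat, if_neg (by omega), Finset.sum_eq_single_of_mem dc hdc.1]
  · simp
  · intro i hi hne
    have hidc : i ≤ dc := hdc.2 hi
    rw [Nat.choose_eq_zero_of_lt (by have := hR2 i hi; omega)]
    simp

lemma Gf_dc_eq (y : ℝ) :
    Gf L R lam rho ε dc dc y = -(dc * (rho dc * xF L lam ε y ^ dc)) / xF L lam ε y := by
  rw [Gf, if_pos rfl, rhat_dc_eq hR2 hdc]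

lemma sum_rhat_eq (hrhoSum : ∑ k ∈ R, rho k = 1) (y : ℝ) :
    ∑ j ∈ Finset.Icc 1 dc, rhat L R lam rho ε j y = xF L lam ε y * y := by
  have hdc1 : 1 ∈ Finset.Icc 1 dc := Finset.mem_Icc.2 ⟨le_rfl, by have := hR2 dc hdc.1; omega⟩
  simp only [rhat_eq_ite_add_sum, Finset.sum_add_distrib, Finset.sum_ite_eq', if_pos hdc1]
  rw [Finset.sum_comm]
  simp only [← Finset.mul_sum]
  rw [Finset.sum_congr rfl fun i hi => by
    rw [sum_Icc_choose_mul_pow (by have := hR2 i hi; omega) (hdc.2 hi)]]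
  rw [← Finset.sum_mul, hrhoSum]
  ring

lemma sum_Gf_eq (hrhoSum : ∑ k ∈ R, rho k = 1) {y : ℝ} (hx : xF L lam ε y ≠ 0) :
    ∑ j ∈ Finset.Icc 1 (dc - 1), Gf L R lam rho ε dc j y = -Gf L R lam rho ε dc dc y - y := by
  have hdc2 := hR2 dc hdc.1
  have hGj : ∀ j ∈ Finset.Icc 1 (dc - 1), Gf L R lam rho ε dc j y
      = (j : ℝ) * (rhat L R lam rho ε (j + 1) y - rhat L R lam rho ε j y) / xF L lam ε y :=
    fun j hj => by rw [Gf, if_neg (by rw [Finset.mem_Icc] at hj; omega)]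
  have hsum := sum_rhat_eq (L := L) (lam := lam) (ε := ε) hR2 hdc hrhoSum y
  rw [← Nat.sub_add_cancel (show 1 ≤ dc by omega), Finset.sum_Icc_succ_top (by omega)] at hsum
  have htel := sum_Icc_natCast_mul_sub (fun j => rhat L R lam rho ε j y) (dc - 1)
  rw [Nat.sub_add_cancel (by omega)] at hsum htel
  rw [Finset.sum_congr rfl hGj, ← Finset.sum_div, htel, Gf, if_pos rfl, Nat.cast_sub (by omega)]
  field_simp
  linear_combination -hsum

end CheckDegrees

/-- The closed form of `∑ s ∈ L, δll k s y / s`. -/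
noncomputable def betaF (L : Finset ℕ) (lam : ℕ → ℝ) (ε : ℝ) (k : ℕ) (y : ℝ) : ℝ :=
  ε * (1 - ε) * lam k * y ^ k * (1 - k * phiF L lam y / (y * lamP L lam y))

lemma betaF_one (k : ℕ) : betaF L lam ε k 1 = ε * (1 - ε) * lam k := by
  simp [betaF, phiF_one]

/-- The closed form of `A^{(l_Σ, r_{d_c})}`, written without the division hidden in `G_{d_c}`. -/
noncomputable def covAF (L : Finset ℕ) (lam rho : ℕ → ℝ) (ε : ℝ) (dc : ℕ) (y : ℝ) :
    ℝ :=
  dc * rho dc * xF L lam ε y ^ (dc - 2) *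
    ((1 - ε) * xF L lam ε y ^ 2 - ε * (1 - ε) * phiF L lam y * xD L lam ε y)

section ClosedForms

variable (hL2 : ∀ k ∈ L, 2 ≤ k)
include hL2

lemma sum_betaF (y : ℝ) :
    ∑ t ∈ L, betaF L lam ε t y = ε * (1 - ε) * (y * lamP L lam y
      - phiF L lam y * (y * lamP L lam y + y ^ 2 * lamD L lam y) / (y * lamP L lam y)) := by
  have hterm : ∀ t ∈ L, betaF L lam ε t y = ε * (1 - ε) * (lam t * y ^ t)
      - ε * (1 - ε) * phiF L lam y / (y * lamP L lam y) * ((t : ℝ) * (lam t * y ^ t)) :=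
    fun t _ => by rw [betaF]; field_simp
  rw [Finset.sum_congr rfl hterm, Finset.sum_sub_distrib, ← Finset.mul_sum, ← Finset.mul_sum,
    sum_mul_pow hL2, sum_natCast_mul_mul_pow hL2]
  field_simp

lemma sum_natCast_sub_one_mul_betaF {y : ℝ} (hy : y ≠ 0) (hlam : lamP L lam y ≠ 0) :
    ∑ t ∈ L, ((t : ℝ) - 1) * betaF L lam ε t y = ε * (1 - ε) * (y ^ 2 * lamD L lam y
      - phiF L lam y * (2 * y ^ 2 * lamD L lam y + y ^ 3 * lamDD L lam y)
        / (y * lamP L lam y)) := by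
  have hterm : ∀ t ∈ L, ((t : ℝ) - 1) * betaF L lam ε t y
      = ε * (1 - ε) * ((t : ℝ) * (lam t * y ^ t)) - ε * (1 - ε) * (lam t * y ^ t)
        - (ε * (1 - ε) * phiF L lam y / (y * lamP L lam y) * ((t : ℝ) ^ 2 * (lam t * y ^ t))
          - ε * (1 - ε) * phiF L lam y / (y * lamP L lam y) * ((t : ℝ) * (lam t * y ^ t))) :=
    fun t _ => by rw [betaF]; field_simp
  simp only [Finset.sum_congr rfl hterm, Finset.sum_sub_distrib, ← Finset.mul_sum,
    sum_mul_pow hL2, sum_natCast_mul_mul_pow hL2, sum_natCast_sq_mul_mul_pow hL2]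
  field_simp
  ring

lemma hasDerivAt_betaF {k : ℕ} (hk : k ∈ L) {y : ℝ} (hy : 0 < y) (hlam : lamP L lam y ≠ 0)
    (hε : ε ≠ 0) :
    HasDerivAt (betaF L lam ε k) (k / y * betaF L lam ε k y
      - k * lhat lam ε k y / (eF L lam ε y * y) * ∑ t ∈ L, betaF L lam ε t y) y := by
  have hm : y * lamP L lam y ≠ 0 := mul_ne_zero hy.ne' hlam
  have hquot := ((hasDerivAt_phiF (lam := lam) hL2 y).const_mul (k : ℝ)).fun_div
    ((hasDerivAt_id y).fun_mul (hasDerivAt_lamP hL2 y)) hm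
  refine (((hasDerivAt_pow k y).fun_mul (hquot.const_sub 1)).const_mul
    (ε * (1 - ε) * lam k)).congr_of_eventuallyEq ?_ |>.congr_deriv ?_
  · exact Filter.Eventually.of_forall fun z => by simp only [betaF, id]; ring
  · obtain ⟨m, rfl⟩ := Nat.exists_eq_add_of_le' (hL2 k hk)
    rw [sum_betaF hL2, betaF, lhat, eF, xF]
    simp only [id, show m + 2 - 1 = m + 1 by omega]
    field_simp
    ring

lemma hasDerivAt_covAF {dc : ℕ} (hR2 : ∀ k ∈ R, 2 ≤ k) (hdc : IsGreatest (R : Set ℕ) dc)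
    {y : ℝ} (hy : 0 < y) (hlam : lamP L lam y ≠ 0) (hε : ε ≠ 0) :
    HasDerivAt (covAF L lam rho ε dc)
      (dc * (xD L lam ε y / xF L lam ε y) * covAF L lam rho ε dc y
        + 2 * (xD L lam ε y / eF L lam ε y) * Gf L R lam rho ε dc dc y
          * ∑ t ∈ L, betaF L lam ε t y
        - Gf L R lam rho ε dc dc y / y ^ 2 * ∑ t ∈ L, ((t : ℝ) - 1) * betaF L lam ε t y) y := by
  have hx := hasDerivAt_xF (lam := lam) (ε := ε) hL2 y
  have hinner := ((hx.fun_pow 2).const_mul (1 - ε)).fun_sub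
    (((hasDerivAt_phiF (lam := lam) hL2 y).fun_mul
      (hasDerivAt_xD (lam := lam) (ε := ε) hL2 y)).const_mul (ε * (1 - ε)))
  refine (((hx.fun_pow (dc - 2)).fun_mul hinner).const_mul (dc * rho dc)).congr_of_eventuallyEq
    ?_ |>.congr_deriv ?_
  · exact Filter.Eventually.of_forall fun z => by simp only [covAF]; ring
  rw [sum_betaF hL2, sum_natCast_sub_one_mul_betaF hL2 hy.ne' hlam, Gf_dc_eq hR2 hdc, covAF, eF]
  simp only [xF, xD, xDD]
  obtain ⟨m, rfl⟩ := Nat.exists_eq_add_of_le' (hR2 dc hdc.1)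
  simp only [Nat.add_sub_cancel]
  rcases m with _ | m
  · field_simp
    ring
  · simp only [Nat.add_sub_cancel]
    push_cast
    field_simp
    ring

end ClosedForms

variable {δll δlr : ℕ → ℕ → ℝ → ℝ}

noncomputable def vvRHS (L : Finset ℕ) (lam : ℕ → ℝ) (ε : ℝ) (δll : ℕ → ℕ → ℝ → ℝ)
    (k s : ℕ) (y : ℝ) : ℝ :=
  -(xF L lam ε y) *
      (((s : ℝ) * lhat lam ε s y / eF L lam ε y ^ 2) * ∑ t ∈ L, δll k t y
        + ((k : ℝ) * lhat lam ε k y / eF L lam ε y ^ 2) * ∑ t ∈ L, δll s t y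
        - (((k : ℝ) + (s : ℝ)) / eF L lam ε y) * δll k s y)
    - xF L lam ε y * (k : ℝ) * (s : ℝ) * (lhat lam ε k y / eF L lam ε y) *
        ((if k = s then (1 : ℝ) else 0) - lhat lam ε s y / eF L lam ε y)

noncomputable def vcRHS (L R : Finset ℕ) (lam rho : ℕ → ℝ) (ε : ℝ) (dc : ℕ)
    (δll δlr : ℕ → ℕ → ℝ → ℝ) (k j : ℕ) (y : ℝ) : ℝ :=
  2 * (xD L lam ε y / eF L lam ε y) * Gf L R lam rho ε dc j y * ∑ t ∈ L, δll k t y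
    - (Gf L R lam rho ε dc j y / y ^ 2) * ∑ i ∈ L, ((i : ℝ) - 1) * δll k i y
    - xF L lam ε y * (aF L lam ε y - (k : ℝ)) * ((k : ℝ) * lhat lam ε k y / eF L lam ε y)
        * (Gf L R lam rho ε dc j y / y)
    - ((k : ℝ) * lhat lam ε k y / (eF L lam ε y * y)) * ∑ t ∈ L, δlr t j y
    + ((k : ℝ) / y) * δlr k j y
    - (j : ℝ) * (xD L lam ε y / xF L lam ε y) *
        ((if j + 1 = dc then
            (∑ t ∈ L, δll k t y) - ∑ j' ∈ Finset.Icc 1 (dc - 1), δlr k j' y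
          else δlr k (j + 1) y) - δlr k j y)

lemma CEvv.hasDerivWithinAt (hvv : CEvv L lam ε δll) {k s : ℕ} (hk : k ∈ L) (hs : s ∈ L)
    {y : ℝ} (hy : y ∈ Set.Ioc 0 1) :
    HasDerivWithinAt (δll k s) (vvRHS L lam ε δll k s y) (Set.Ioc 0 1) y :=
  hvv.1 k hk s hs y hy

lemma CEvc.hasDerivWithinAt {dc : ℕ} (hvc : CEvc L R lam rho ε dc δll δlr) {k j : ℕ}
    (hk : k ∈ L) (hj : j ∈ Finset.Icc 1 (dc - 1)) {y : ℝ} (hy : y ∈ Set.Ioc 0 1) :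
    HasDerivWithinAt (δlr k j) (vcRHS L R lam rho ε dc δll δlr k j y) (Set.Ioc 0 1) y :=
  hvc.1 k hk j hj y hy

lemma vvRHS_sub_vvRHS_swap {k s : ℕ} {y : ℝ} (hx : xF L lam ε y ≠ 0) (hy : y ≠ 0) :
    vvRHS L lam ε δll k s y - vvRHS L lam ε δll s k y
      = (k + s) / y * (δll k s y - δll s k y) := by
  unfold vvRHS eF
  by_cases hks : k = s
  · subst hks
    ring
  · rw [if_neg hks, if_neg (Ne.symm hks)]
    field_simp
    ring

section Sums

variable (hL2 : ∀ k ∈ L, 2 ≤ k)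
include hL2

lemma sum_vvRHS {k : ℕ} (hk : k ∈ L) (y : ℝ) :
    ∑ s ∈ L, vvRHS L lam ε δll k s y
      = xF L lam ε y / eF L lam ε y
          * (k * ∑ t ∈ L, δll k t y + ∑ s ∈ L, (s : ℝ) * δll k s y)
        - xF L lam ε y * (eF L lam ε y + y ^ 2 * xD L lam ε y) / eF L lam ε y ^ 2
          * ∑ t ∈ L, δll k t y
        - xF L lam ε y * k * lhat lam ε k y / eF L lam ε y ^ 2
          * ∑ s ∈ L, ∑ t ∈ L, δll s t y
        + xF L lam ε y * k * lhat lam ε k y / eF L lam ε y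
          * ((eF L lam ε y + y ^ 2 * xD L lam ε y) / eF L lam ε y - k) := by
  have hterm : ∀ s ∈ L, vvRHS L lam ε δll k s y
      = xF L lam ε y * k * lhat lam ε k y / eF L lam ε y ^ 2 * ((s : ℝ) * lhat lam ε s y)
        - xF L lam ε y / eF L lam ε y ^ 2 * (∑ t ∈ L, δll k t y)
          * ((s : ℝ) * lhat lam ε s y)
        - xF L lam ε y * k * lhat lam ε k y / eF L lam ε y ^ 2 * ∑ t ∈ L, δll s t y
        + xF L lam ε y / eF L lam ε y * (k * δll k s y + (s : ℝ) * δll k s y)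
        - xF L lam ε y * k * lhat lam ε k y / eF L lam ε y
          * (if k = s then (s : ℝ) else 0) := by
    intro s _
    unfold vvRHS
    split_ifs with hks
    · subst hks
      ring
    · ring
  simp only [Finset.sum_congr rfl hterm, Finset.sum_add_distrib, Finset.sum_sub_distrib,
    ← Finset.mul_sum, Finset.sum_ite_eq, if_pos hk, sum_natCast_mul_lhat hL2]
  ring

lemma sum_inv_mul_sum_vvRHS {y : ℝ} (hx : xF L lam ε y ≠ 0) (hy : y ≠ 0) :
    ∑ k ∈ L, 1 / (k : ℝ) * ∑ s ∈ L, vvRHS L lam ε δll k s y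
      = 1 / y * ∑ k ∈ L, 1 / (k : ℝ) * ∑ s ∈ L, ((s : ℝ) - 1) * δll k s y
        - y * xD L lam ε y / eF L lam ε y
          * ∑ k ∈ L, 1 / (k : ℝ) * ∑ t ∈ L, δll k t y := by
  have he : eF L lam ε y ≠ 0 := mul_ne_zero hx hy
  have hterm : ∀ k ∈ L, 1 / (k : ℝ) * ∑ s ∈ L, vvRHS L lam ε δll k s y
      = xF L lam ε y / eF L lam ε y * ∑ t ∈ L, δll k t y
        + xF L lam ε y / eF L lam ε y * (1 / k * ∑ s ∈ L, (s : ℝ) * δll k s y)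
        - xF L lam ε y * (eF L lam ε y + y ^ 2 * xD L lam ε y) / eF L lam ε y ^ 2
          * (1 / k * ∑ t ∈ L, δll k t y)
        - xF L lam ε y / eF L lam ε y ^ 2 * (∑ s ∈ L, ∑ t ∈ L, δll s t y)
          * lhat lam ε k y
        + xF L lam ε y * (eF L lam ε y + y ^ 2 * xD L lam ε y) / eF L lam ε y ^ 2
          * lhat lam ε k y
        - xF L lam ε y / eF L lam ε y * (k * lhat lam ε k y) := by
    intro k hk
    have hk0 : (k : ℝ) ≠ 0 := by have := hL2 k hk; positivity
    rw [sum_vvRHS hL2 hk]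
    field_simp
    ring
  have hsub : ∑ k ∈ L, 1 / (k : ℝ) * ∑ s ∈ L, ((s : ℝ) - 1) * δll k s y
      = ∑ k ∈ L, 1 / (k : ℝ) * ∑ s ∈ L, (s : ℝ) * δll k s y
        - ∑ k ∈ L, 1 / (k : ℝ) * ∑ t ∈ L, δll k t y := by
    simp only [← Finset.sum_sub_distrib, ← mul_sub, sub_one_mul]
  rw [Finset.sum_congr rfl hterm, hsub]
  simp only [Finset.sum_add_distrib, Finset.sum_sub_distrib, ← Finset.mul_sum,
    sum_lhat hL2, sum_natCast_mul_lhat hL2]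
  unfold eF at he ⊢
  field_simp
  ring

lemma sum_inv_mul_vvRHS {k : ℕ} (hk : k ∈ L) {y : ℝ} (hx : xF L lam ε y ≠ 0)
    (hy : y ≠ 0) :
    ∑ s ∈ L, 1 / (s : ℝ) * vvRHS L lam ε δll k s y
      = k / y * ∑ s ∈ L, 1 / (s : ℝ) * δll k s y
        - k * lhat lam ε k y / (eF L lam ε y * y)
          * ∑ s ∈ L, 1 / (s : ℝ) * ∑ t ∈ L, δll s t y := by
  have he : eF L lam ε y ≠ 0 := mul_ne_zero hx hy
  have hterm : ∀ s ∈ L, 1 / (s : ℝ) * vvRHS L lam ε δll k s y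
      = (xF L lam ε y * k * lhat lam ε k y / eF L lam ε y ^ 2
          - xF L lam ε y / eF L lam ε y ^ 2 * ∑ t ∈ L, δll k t y) * lhat lam ε s y
        - xF L lam ε y * k * lhat lam ε k y / eF L lam ε y ^ 2
          * (1 / s * ∑ t ∈ L, δll s t y)
        + xF L lam ε y / eF L lam ε y * δll k s y
        + xF L lam ε y * k / eF L lam ε y * (1 / s * δll k s y)
        - xF L lam ε y * k * lhat lam ε k y / eF L lam ε y * (if k = s then 1 else 0) := by
    intro s hs
    have hs0 : (s : ℝ) ≠ 0 := by have := hL2 s hs; positivity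
    unfold vvRHS
    split_ifs with hks
    · subst hks
      field_simp
      ring
    · field_simp
      ring
  rw [Finset.sum_congr rfl hterm]
  simp only [Finset.sum_add_distrib, Finset.sum_sub_distrib, ← Finset.mul_sum, sum_lhat hL2,
    Finset.sum_ite_eq, if_pos hk]
  unfold eF at he ⊢
  field_simp
  ring

end Sums

lemma sum_vcRHS {dc : ℕ} (hR2 : ∀ k ∈ R, 2 ≤ k) (hdc : IsGreatest (R : Set ℕ) dc)
    (hrhoSum : ∑ k ∈ R, rho k = 1) (k : ℕ) {y : ℝ} (hx : xF L lam ε y ≠ 0) :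
    ∑ j ∈ Finset.Icc 1 (dc - 1), vcRHS L R lam rho ε dc δll δlr k j y
      = (-Gf L R lam rho ε dc dc y - y)
          * (2 * (xD L lam ε y / eF L lam ε y) * ∑ t ∈ L, δll k t y
            - 1 / y ^ 2 * ∑ i ∈ L, ((i : ℝ) - 1) * δll k i y
            - xF L lam ε y * (aF L lam ε y - k) * (k * lhat lam ε k y / eF L lam ε y) / y)
        - k * lhat lam ε k y / (eF L lam ε y * y)
          * ∑ j ∈ Finset.Icc 1 (dc - 1), ∑ t ∈ L, δlr t j y
        + k / y * ∑ j ∈ Finset.Icc 1 (dc - 1), δlr k j y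
        - xD L lam ε y / xF L lam ε y * (dc * (∑ t ∈ L, δll k t y
            - ∑ j ∈ Finset.Icc 1 (dc - 1), δlr k j y) - ∑ t ∈ L, δll k t y) := by
  have hdc2 := hR2 dc hdc.1
  -- `q m = δ^{l_k,r_m}`, including the convention for `m = d_c`
  set q : ℕ → ℝ := fun m => if m = dc then
    (∑ t ∈ L, δll k t y) - ∑ j ∈ Finset.Icc 1 (dc - 1), δlr k j y else δlr k m y with hq
  have hterm : ∀ j ∈ Finset.Icc 1 (dc - 1), vcRHS L R lam rho ε dc δll δlr k j y
      = (2 * (xD L lam ε y / eF L lam ε y) * ∑ t ∈ L, δll k t y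
          - 1 / y ^ 2 * ∑ i ∈ L, ((i : ℝ) - 1) * δll k i y
          - xF L lam ε y * (aF L lam ε y - k) * (k * lhat lam ε k y / eF L lam ε y) / y)
          * Gf L R lam rho ε dc j y
        - k * lhat lam ε k y / (eF L lam ε y * y) * ∑ t ∈ L, δlr t j y
        + k / y * δlr k j y
        - xD L lam ε y / xF L lam ε y * (j * (q (j + 1) - q j)) := by
    intro j hj
    rw [Finset.mem_Icc] at hj
    have hqj : q j = δlr k j y := if_neg (by omega)
    have hqj1 : q (j + 1) = if j + 1 = dc then
        (∑ t ∈ L, δll k t y) - ∑ j' ∈ Finset.Icc 1 (dc - 1), δlr k j' y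
      else δlr k (j + 1) y := rfl
    rw [hqj, hqj1, vcRHS]
    ring
  have hq_top : q (dc - 1 + 1)
      = (∑ t ∈ L, δll k t y) - ∑ j ∈ Finset.Icc 1 (dc - 1), δlr k j y :=
    if_pos (by omega)
  have hq_sum :
      ∑ j ∈ Finset.Icc 1 (dc - 1), q j = ∑ j ∈ Finset.Icc 1 (dc - 1), δlr k j y :=
    Finset.sum_congr rfl fun j hj => if_neg (by rw [Finset.mem_Icc] at hj; omega)
  rw [Finset.sum_congr rfl hterm]
  simp only [Finset.sum_add_distrib, Finset.sum_sub_distrib, ← Finset.mul_sum,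
    sum_Gf_eq hR2 hdc hrhoSum hx, sum_Icc_natCast_mul_sub, hq_top, hq_sum]
  rw [Nat.cast_sub (by omega)]
  ring

noncomputable def covLSigmaRdc (L : Finset ℕ) (dc : ℕ) (δll δlr : ℕ → ℕ → ℝ → ℝ) (y : ℝ) :
    ℝ :=
  ∑ k ∈ L, (1 / (k : ℝ)) *
    ((∑ t ∈ L, δll k t y) - ∑ j ∈ Finset.Icc 1 (dc - 1), δlr k j y)

lemma sum_inv_mul_sum_vcRHS {dc : ℕ} (hL2 : ∀ k ∈ L, 2 ≤ k) (hR2 : ∀ k ∈ R, 2 ≤ k)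
    (hdc : IsGreatest (R : Set ℕ) dc) (hrhoSum : ∑ k ∈ R, rho k = 1) {y : ℝ}
    (hx : xF L lam ε y ≠ 0) (hy : y ≠ 0) :
    ∑ k ∈ L, 1 / (k : ℝ) *
        ∑ j ∈ Finset.Icc 1 (dc - 1), vcRHS L R lam rho ε dc δll δlr k j y
      = (-Gf L R lam rho ε dc dc y - y)
          * (2 * (xD L lam ε y / eF L lam ε y)
              * ∑ k ∈ L, 1 / (k : ℝ) * ∑ t ∈ L, δll k t y
            - 1 / y ^ 2 * ∑ k ∈ L, 1 / (k : ℝ) * ∑ s ∈ L, ((s : ℝ) - 1) * δll k s y)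
        - xD L lam ε y / xF L lam ε y * (dc * covLSigmaRdc L dc δll δlr y
          - ∑ k ∈ L, 1 / (k : ℝ) * ∑ t ∈ L, δll k t y) := by
  have hterm : ∀ k ∈ L,
      1 / (k : ℝ) * ∑ j ∈ Finset.Icc 1 (dc - 1), vcRHS L R lam rho ε dc δll δlr k j y
      = (-Gf L R lam rho ε dc dc y - y) * (2 * (xD L lam ε y / eF L lam ε y)
          * (1 / k * ∑ t ∈ L, δll k t y)
          - 1 / y ^ 2 * (1 / k * ∑ s ∈ L, ((s : ℝ) - 1) * δll k s y))
        + (-Gf L R lam rho ε dc dc y - y) * xF L lam ε y / (eF L lam ε y * y)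
          * (k * lhat lam ε k y - aF L lam ε y * lhat lam ε k y)
        - 1 / (eF L lam ε y * y) * (∑ j ∈ Finset.Icc 1 (dc - 1), ∑ t ∈ L, δlr t j y)
          * lhat lam ε k y
        + 1 / y * ∑ j ∈ Finset.Icc 1 (dc - 1), δlr k j y
        - xD L lam ε y / xF L lam ε y * (dc * (1 / k * (∑ t ∈ L, δll k t y
            - ∑ j ∈ Finset.Icc 1 (dc - 1), δlr k j y)) - 1 / k * ∑ t ∈ L, δll k t y) := by
    intro k hk
    have hk0 : (k : ℝ) ≠ 0 := by have := hL2 k hk; positivity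
    rw [sum_vcRHS hR2 hdc hrhoSum k hx]
    field_simp
    ring
  rw [Finset.sum_congr rfl hterm]
  simp only [Finset.sum_add_distrib, Finset.sum_sub_distrib, ← Finset.mul_sum,
    sum_natCast_mul_lhat hL2, sum_lhat hL2, covLSigmaRdc]
  rw [Finset.sum_comm (s := Finset.Icc 1 (dc - 1))]
  -- the `a`-terms cancel since `a e = e + y² x' = Σ_k k l̂_k`
  unfold aF eF
  field_simp
  ring

lemma CEvv.symm (hvv : CEvv L lam ε δll) (hL : L.Nonempty) (hpos : ∀ k ∈ L, 0 < lam k)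
    (hε : 0 < ε) {y : ℝ} (hy : y ∈ Set.Ioc 0 1) {k s : ℕ} (hk : k ∈ L) (hs : s ∈ L) :
    δll k s y = δll s k y := by
  have hsub : Set.Icc y 1 ⊆ Set.Ioc 0 1 := fun t ht => ⟨hy.1.trans_le ht.1, ht.2⟩
  refine sub_eq_zero.1 <| eqOn_zero_of_hasDerivWithinAt_mul (c := fun t => (k + s : ℝ) / t)
    (f := fun t => δll k s t - δll s k t)
    (continuousOn_const.div continuousOn_id fun t ht => (hsub ht).1.ne') (fun t ht => ?_) ?_
    ⟨le_rfl, hy.2⟩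
  · have ht := hsub ht
    rw [← vvRHS_sub_vvRHS_swap (xF_pos hL hpos hε ht.1).ne' ht.1.ne']
    exact ((hvv.hasDerivWithinAt hk hs ht).sub (hvv.hasDerivWithinAt hs hk ht)).mono hsub
  · rcases eq_or_ne k s with rfl | hks
    · exact sub_self _
    · simp [hvv.2 k hk s hs, hvv.2 s hs k hk, hks, hks.symm]

lemma CEvv.hasDerivWithinAt_sum_inv_mul (hvv : CEvv L lam ε δll) (hL : L.Nonempty)
    (hL2 : ∀ k ∈ L, 2 ≤ k) (hpos : ∀ k ∈ L, 0 < lam k) (hε : 0 < ε) {y : ℝ}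
    (hy : y ∈ Set.Ioc 0 1) {k : ℕ} (hk : k ∈ L) :
    HasDerivWithinAt (fun y => ∑ s ∈ L, 1 / (s : ℝ) * δll k s y)
      (k / y * ∑ s ∈ L, 1 / (s : ℝ) * δll k s y
        - k * lhat lam ε k y / (eF L lam ε y * y) * ∑ u ∈ L, ∑ s ∈ L, 1 / (s : ℝ) * δll u s y)
      (Set.Ioc 0 1) y := by
  have hsymm := sum_mul_sum_mul_of_symm (fun k hk s hs => hvv.symm hL hpos hε hy hk hs)
    (fun s => 1 / (s : ℝ)) 1
  simp only [Pi.one_apply, one_mul] at hsymm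
  rw [← hsymm, ← sum_inv_mul_vvRHS hL2 hk (xF_pos hL hpos hε hy.1).ne' hy.1.ne']
  exact HasDerivWithinAt.fun_sum fun s hs =>
    (hvv.hasDerivWithinAt hk hs hy).const_mul (1 / (s : ℝ))

lemma CEvv.sum_inv_mul_one (hvv : CEvv L lam ε δll) (hL2 : ∀ k ∈ L, 2 ≤ k) {k : ℕ}
    (hk : k ∈ L) : ∑ s ∈ L, 1 / (s : ℝ) * δll k s 1 = ε * (1 - ε) * lam k := by
  have hterm : ∀ s ∈ L,
      1 / (s : ℝ) * δll k s 1 = if k = s then ε * (1 - ε) * lam k else 0 := by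
    intro s hs
    have hs0 : (s : ℝ) ≠ 0 := by have := hL2 s hs; positivity
    rw [hvv.2 k hk s hs]
    split_ifs with hks
    · subst hks
      field_simp
    · simp
  rw [Finset.sum_congr rfl hterm, Finset.sum_ite_eq, if_pos hk]

lemma CEvv.sum_inv_mul_eq_betaF (hvv : CEvv L lam ε δll) (hL : L.Nonempty)
    (hL2 : ∀ k ∈ L, 2 ≤ k) (hpos : ∀ k ∈ L, 0 < lam k) (hε : 0 < ε) {y : ℝ}
    (hy : y ∈ Set.Ioc 0 1) {k : ℕ} (hk : k ∈ L) :
    ∑ s ∈ L, 1 / (s : ℝ) * δll k s y = betaF L lam ε k y := by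
  have hsub : Set.Icc y 1 ⊆ Set.Ioc 0 1 := fun t ht => ⟨hy.1.trans_le ht.1, ht.2⟩
  have key := eqOn_zero_of_hasDerivWithinAt_diag_sub_sum (ι := L) (a := y) (b := 1)
    (d := fun i t => i / t) (w := fun i t => i * lhat lam ε i t / (eF L lam ε t * t))
    (f := fun t i => ∑ s ∈ L, 1 / (s : ℝ) * δll i s t - betaF L lam ε i t)
    (fun i => continuousOn_const.div continuousOn_id fun t ht => (hsub ht).1.ne')
    (fun i => ((continuous_const.mul (by unfold lhat; fun_prop)).continuousOn).div
      (((continuous_xF hL2).mul continuous_id).mul continuous_id).continuousOn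
      fun t ht => (mul_pos (eF_pos hL hpos hε (hsub ht).1) (hsub ht).1).ne')
    (fun t ht => hasDerivWithinAt_pi.2 fun i => ?_)
    (funext fun i => by simp only [hvv.sum_inv_mul_one hL2 i.2, betaF_one, sub_self, Pi.zero_apply])
    ⟨le_rfl, hy.2⟩
  · exact sub_eq_zero.1 (congrFun key ⟨k, hk⟩)
  have ht := hsub ht
  refine (((hvv.hasDerivWithinAt_sum_inv_mul hL hL2 hpos hε ht i.2).mono hsub).sub
    (hasDerivAt_betaF hL2 i.2 ht.1 (lamP_pos hL hpos ht.1).ne' hε.ne').hasDerivWithinAt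
    ).congr_deriv ?_
  rw [Finset.sum_coe_sort L fun u => ∑ s ∈ L, 1 / (s : ℝ) * δll u s t - betaF L lam ε u t,
    Finset.sum_sub_distrib]
  ring

lemma hasDerivWithinAt_covLSigmaRdc {dc : ℕ} (hvv : CEvv L lam ε δll)
    (hvc : CEvc L R lam rho ε dc δll δlr) {y : ℝ} (hy : y ∈ Set.Ioc 0 1) :
    HasDerivWithinAt (covLSigmaRdc L dc δll δlr)
      (∑ k ∈ L, 1 / (k : ℝ) * ∑ s ∈ L, vvRHS L lam ε δll k s y
        - ∑ k ∈ L, 1 / (k : ℝ) *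
            ∑ j ∈ Finset.Icc 1 (dc - 1), vcRHS L R lam rho ε dc δll δlr k j y)
      (Set.Ioc 0 1) y := by
  simp only [← Finset.sum_sub_distrib, ← mul_sub]
  exact HasDerivWithinAt.fun_sum fun k hk =>
    ((HasDerivWithinAt.fun_sum fun s hs => hvv.hasDerivWithinAt hk hs hy).fun_sub
      (HasDerivWithinAt.fun_sum fun j hj => hvc.hasDerivWithinAt hk hj hy)).const_mul _

lemma covLSigmaRdc_one {dc : ℕ} (hvv : CEvv L lam ε δll)
    (hvc : CEvc L R lam rho ε dc δll δlr)
    (hL2 : ∀ k ∈ L, 2 ≤ k) (hlamSum : ∑ k ∈ L, lam k = 1) (hR2 : ∀ k ∈ R, 2 ≤ k)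
    (hdc : IsGreatest (R : Set ℕ) dc) (hrhoSum : ∑ k ∈ R, rho k = 1) (hε : ε ≠ 0) :
    covLSigmaRdc L dc δll δlr 1 = covAF L lam rho ε dc 1 := by
  have hx1 : xF L lam ε 1 = ε := by rw [xF, lamP_one hlamSum, mul_one]
  have hG := sum_Gf_eq (L := L) (lam := lam) (ε := ε) hR2 hdc hrhoSum (y := 1)
    (by rw [hx1]; exact hε)
  have hterm : ∀ k ∈ L,
      1 / (k : ℝ) * ((∑ t ∈ L, δll k t 1) - ∑ j ∈ Finset.Icc 1 (dc - 1), δlr k j 1)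
        = -(ε * (1 - ε) * Gf L R lam rho ε dc dc 1) * lam k := by
    intro k hk
    have hk0 : (k : ℝ) ≠ 0 := by have := hL2 k hk; positivity
    rw [Finset.sum_congr rfl fun t ht => hvv.2 k hk t ht,
      Finset.sum_congr rfl fun j hj => hvc.2 k hk j hj, ← Finset.mul_sum, hG]
    simp only [ite_mul, one_mul, zero_mul, Finset.sum_ite_eq, if_pos hk]
    field_simp
    ring
  rw [covLSigmaRdc, Finset.sum_congr rfl hterm, ← Finset.mul_sum, hlamSum, Gf_dc_eq hR2 hdc,
    covAF, phiF_one, hx1]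
  obtain ⟨m, rfl⟩ := Nat.exists_eq_add_of_le' (hR2 dc hdc.1)
  simp only [Nat.add_sub_cancel]
  field_simp
  ring

lemma CEvv.sum_inv_mul_sum_mul_eq_sum_mul_betaF (hvv : CEvv L lam ε δll) (hL : L.Nonempty)
    (hL2 : ∀ k ∈ L, 2 ≤ k) (hpos : ∀ k ∈ L, 0 < lam k) (hε : 0 < ε) {y : ℝ}
    (hy : y ∈ Set.Ioc 0 1) (b : ℕ → ℝ) :
    ∑ k ∈ L, 1 / (k : ℝ) * ∑ s ∈ L, b s * δll k s y
      = ∑ s ∈ L, b s * betaF L lam ε s y := by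
  rw [sum_mul_sum_mul_of_symm (fun k hk s hs => hvv.symm hL hpos hε hy hk hs)]
  exact Finset.sum_congr rfl fun s hs => by rw [hvv.sum_inv_mul_eq_betaF hL hL2 hpos hε hy hs]

lemma covLSigmaRdc_eq_covAF {dc : ℕ} (hvv : CEvv L lam ε δll)
    (hvc : CEvc L R lam rho ε dc δll δlr) (hL : L.Nonempty) (hL2 : ∀ k ∈ L, 2 ≤ k)
    (hpos : ∀ k ∈ L, 0 < lam k) (hlamSum : ∑ k ∈ L, lam k = 1) (hR2 : ∀ k ∈ R, 2 ≤ k)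
    (hdc : IsGreatest (R : Set ℕ) dc) (hrhoSum : ∑ k ∈ R, rho k = 1) (hε : 0 < ε) {y : ℝ}
    (hy : y ∈ Set.Ioc 0 1) :
    covLSigmaRdc L dc δll δlr y = covAF L lam rho ε dc y := by
  have hsub : Set.Icc y 1 ⊆ Set.Ioc 0 1 := fun t ht => ⟨hy.1.trans_le ht.1, ht.2⟩
  have hx : ∀ t ∈ Set.Icc y 1, xF L lam ε t ≠ 0 := fun t ht =>
    (xF_pos hL hpos hε (hsub ht).1).ne'
  refine sub_eq_zero.1 <| eqOn_zero_of_hasDerivWithinAt_mul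
    (c := fun t => dc * (xD L lam ε t / xF L lam ε t))
    (f := fun t => covLSigmaRdc L dc δll δlr t - covAF L lam rho ε dc t)
    (continuousOn_const.mul
      ((continuous_xD hL2).continuousOn.div (continuous_xF hL2).continuousOn hx))
    (fun t ht => ?_)
    (sub_eq_zero.2 (covLSigmaRdc_one hvv hvc hL2 hlamSum hR2 hdc hrhoSum hε.ne'))
    ⟨le_rfl, hy.2⟩
  have ht' := hsub ht
  have hsum := hvv.sum_inv_mul_sum_mul_eq_sum_mul_betaF hL hL2 hpos hε ht' 1
  simp only [Pi.one_apply, one_mul] at hsum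
  refine (((hasDerivWithinAt_covLSigmaRdc hvv hvc ht').mono hsub).sub
    (hasDerivAt_covAF hL2 hR2 hdc ht'.1 (lamP_pos hL hpos ht'.1).ne' hε.ne').hasDerivWithinAt
    ).congr_deriv ?_
  rw [sum_inv_mul_sum_vvRHS hL2 (hx t ht) ht'.1.ne',
    sum_inv_mul_sum_vcRHS hL2 hR2 hdc hrhoSum (hx t ht) ht'.1.ne', hsum,
    hvv.sum_inv_mul_sum_mul_eq_sum_mul_betaF hL hL2 hpos hε ht' fun s => (s : ℝ) - 1]
  have hy0 := ht'.1.ne'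
  have hx0 := hx t ht
  unfold eF
  field_simp
  ring

theorem statement_11_general
    (L R : Finset ℕ) (hL : L.Nonempty) (hR : R.Nonempty)
    (hL2 : ∀ k ∈ L, 2 ≤ k) (hR2 : ∀ k ∈ R, 2 ≤ k)
    (lam rho : ℕ → ℝ)
    (hlamPos : ∀ k ∈ L, 0 < lam k) (hlamSum : ∑ k ∈ L, lam k = 1)
    (hrhoSum : ∑ k ∈ R, rho k = 1)
    (ε : ℝ) (hε : ε ∈ Set.Ioo (0 : ℝ) 1)
    (dc : ℕ) (hdc : dc = R.max' hR)
    (δll : ℕ → ℕ → ℝ → ℝ) (hvv : CEvv L lam ε δll)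
    (δlr : ℕ → ℕ → ℝ → ℝ) (hvc : CEvc L R lam rho ε dc δll δlr) :
    ∀ y ∈ Set.Ioc (0 : ℝ) 1,
      (∑ k ∈ L, (1 / (k : ℝ)) *
          ((∑ t ∈ L, δll k t y) - ∑ j ∈ Finset.Icc 1 (dc - 1), δlr k j y)) =
        ε * (1 - ε) * (∑ i ∈ L, lam i / (i : ℝ) * (y ^ i - 1)) * (xD L lam ε y / xF L lam ε y) * Gf L R lam rho ε dc dc y
        - (1 - ε) * xF L lam ε y * Gf L R lam rho ε dc dc y := by
  intro y hy
  have hdcR : IsGreatest (R : Set ℕ) dc := hdc ▸ R.isGreatest_max' hR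
  have hx := (xF_pos hL hlamPos hε.1 hy.1).ne'
  change covLSigmaRdc L dc δll δlr y
    = ε * (1 - ε) * phiF L lam y * (xD L lam ε y / xF L lam ε y) * Gf L R lam rho ε dc dc y
      - (1 - ε) * xF L lam ε y * Gf L R lam rho ε dc dc y
  rw [covLSigmaRdc_eq_covAF hvv hvc hL hL2 hlamPos hlamSum hR2 hdcR hrhoSum hε.1 hy,
    Gf_dc_eq hR2 hdcR, covAF]
  obtain ⟨m, rfl⟩ := Nat.exists_eq_add_of_le' (hR2 dc hdcR.1)
  simp only [Nat.add_sub_cancel]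
  field_simp
  ring

theorem statement_11
    (L R : Finset ℕ) (hL : L.Nonempty) (hR : R.Nonempty)
    (hL2 : ∀ k ∈ L, 2 ≤ k) (hR2 : ∀ k ∈ R, 2 ≤ k)
    (lam rho : ℕ → ℝ)
    (hlamPos : ∀ k ∈ L, 0 < lam k) (hlamSum : ∑ k ∈ L, lam k = 1)
    (hrhoPos : ∀ k ∈ R, 0 < rho k) (hrhoSum : ∑ k ∈ R, rho k = 1)
    (ε : ℝ) (hε : ε ∈ Set.Ioo (0 : ℝ) 1)
    (dc : ℕ) (hdc : dc = R.max' hR)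
    (δll : ℕ → ℕ → ℝ → ℝ) (hvv : CEvv L lam ε δll)
    (δlr : ℕ → ℕ → ℝ → ℝ) (hvc : CEvc L R lam rho ε dc δll δlr) :
    ∀ y ∈ Set.Ioc (0 : ℝ) 1,
      (∑ k ∈ L, (1 / (k : ℝ)) *
          ((∑ t ∈ L, δll k t y) - ∑ j ∈ Finset.Icc 1 (dc - 1), δlr k j y)) =
        ε * (1 - ε) * (∑ i ∈ L, lam i / (i : ℝ) * (y ^ i - 1)) * (xD L lam ε y / xF L lam ε y) * Gf L R lam rho ε dc dc y
        - (1 - ε) * xF L lam ε y * Gf L R lam rho ε dc dc y :=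
  statement_11_general L R hL hR hL2 hR2 lam rho hlamPos hlamSum hrhoSum ε hε dc hdc δll hvv δlr hvc

end LDPC
end

section
/- Under the threshold conditions y* = 1 − ρ(x̃*) and ρ'(x̃*) ε* λ'(y*) = 1, the explicit solution Δ₁₁ of covariance evolution for δ^{r_1,r_1} evaluated at y = y* satisfies Δ₁₁(y*) = (x* ρ'(x̃*))² · B, where B := [ρ(x̃*)² − ρ(x̃*²) − x̃*² ρ'(x̃*²)] / ρ'(x̃*)² + [1 − 2x* ρ(x̃*)] / ρ'(x̃*) + x*² − ε*² λ(y*²) − ε*² y*² λ'(y*²). Consequently the slope scaling parameter α = √(n/ξ) · √(Δ₁₁(y*)) / |∂R₁/∂ε(ε*, y*)| equals √(n/ξ) · √B / λ(y*). (Corollary 1.) -/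
open Finset

namespace LDPC

/-!
At the threshold the density-evolution fixed point gives `r̂₁(y*) = 0`, and the tangency
condition `ρ'(x̃*) x' = 1` gives `x' G₁ = x` with `G₁ = x ρ'(x̃)`. The latter makes both
terms of `Δ₁₁` involving `F` and `F'` vanish, so only polynomial data of `λ` and `ρ` at
`y*`, `x̃*` and their squares remain, and these assemble into `(x ρ'(x̃))² B`. Likewise
`∂R₁/∂ε = λ(y) (y - 1 + ρ(x̃)) - x λ(y) ρ'(x̃) = -x λ(y*) ρ'(x̃*)` at the threshold.
-/

theorem lamP_eq_rhoP : lamP = rhoP := rfl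

theorem lamD_eq_rhoD : lamD = rhoD := rfl

section DegreePolynomial

variable {R : Finset ℕ} {rho : ℕ → ℝ}

theorem rhoP_pos (hR : R.Nonempty) (hrho : ∀ k ∈ R, 0 < rho k) {z : ℝ} (hz : 0 < z) :
    0 < rhoP R rho z :=
  Finset.sum_pos (fun k hk => mul_pos (hrho k hk) (pow_pos hz _)) hR

theorem hasDerivAt_rhoP (hR : ∀ k ∈ R, 1 ≤ k) (z : ℝ) :
    HasDerivAt (rhoP R rho) (rhoD R rho z) z := by
  refine (HasDerivAt.fun_sum fun k _ => (hasDerivAt_pow (k - 1) z).const_mul (rho k)).congr_deriv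
    (Finset.sum_congr rfl fun k hk => ?_)
  rw [Nat.cast_sub (hR k hk), Nat.sub_sub]
  push_cast
  ring

/-- The derivative of `w ρ(w)` at `w = z²`, written as a single power series in `z`. -/
theorem rhoP_sq_add_sq_mul_rhoD_sq (hR : ∀ k ∈ R, 1 ≤ k) (z : ℝ) :
    rhoP R rho (z ^ 2) + z ^ 2 * rhoD R rho (z ^ 2) = ∑ k ∈ R, (k : ℝ) * rho k * z ^ (2 * k - 2) := by
  rw [rhoP, rhoD, Finset.mul_sum, ← Finset.sum_add_distrib]
  refine Finset.sum_congr rfl fun k hk => ?_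
  obtain ⟨m, rfl⟩ : ∃ m, k = m + 1 := ⟨k - 1, by have := hR k hk; omega⟩
  rcases m with _ | m
  · simp
  · rw [show 2 * (m + 1 + 1) - 2 = 2 + 2 * m by omega, show m + 1 + 1 - 1 = m + 1 by omega,
      show m + 1 + 1 - 2 = m by omega, pow_add, ← pow_mul, pow_succ]
    push_cast
    ring

end DegreePolynomial

section Ensemble

variable {L R : Finset ℕ} {lam rho : ℕ → ℝ} {ε y : ℝ}

theorem rhat_one :
    rhat L R lam rho ε 1 y = xF L lam ε y * (y - 1 + rhoP R rho (1 - xF L lam ε y)) :=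
  if_pos rfl

theorem rhat_two (hR : ∀ k ∈ R, 1 ≤ k) :
    rhat L R lam rho ε 2 y = xF L lam ε y ^ 2 * rhoD R rho (1 - xF L lam ε y) := by
  rw [rhat, if_neg (by norm_num), rhoD, Finset.mul_sum]
  refine Finset.sum_congr rfl fun i hi => ?_
  rw [show 2 - 1 = 1 from rfl, Nat.choose_one_right, Nat.cast_sub (hR i hi)]
  push_cast
  ring

theorem Gf_one {dc : ℕ} (hdc : dc ≠ 1) :
    Gf L R lam rho ε dc 1 y =
      (rhat L R lam rho ε 2 y - rhat L R lam rho ε 1 y) / xF L lam ε y := by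
  rw [Gf, if_neg hdc.symm, Nat.cast_one, one_mul]

theorem Vf_one_one (hR : ∀ k ∈ R, 1 ≤ k) :
    Vf L R lam rho ε 1 1 y = xF L lam ε y ^ 2 *
      (rhoP R rho ((1 - xF L lam ε y) ^ 2)
        + (1 - xF L lam ε y) ^ 2 * rhoD R rho ((1 - xF L lam ε y) ^ 2)) := by
  rw [rhoP_sq_add_sq_mul_rhoD_sq hR, Vf, Finset.mul_sum]
  refine Finset.sum_congr rfl fun s _ => ?_
  rw [show 2 * s - 1 - 1 = 2 * s - 2 by omega]
  simp only [Nat.sub_self, Nat.choose_zero_right, Nat.cast_one]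
  ring

theorem hasDerivAt_R1 (hR : ∀ k ∈ R, 1 ≤ k) (c : ℝ) :
    HasDerivAt (fun e : ℝ => e * c * (y - 1 + rhoP R rho (1 - e * c)))
      (c * (y - 1 + rhoP R rho (1 - ε * c)) - ε * c ^ 2 * rhoD R rho (1 - ε * c)) ε := by
  have hinner : HasDerivAt (fun e : ℝ => 1 - e * c) (-c) ε := by
    simpa using ((hasDerivAt_id ε).mul_const c).const_sub 1
  have hρ := (hasDerivAt_rhoP (rho := rho) hR (1 - ε * c)).comp ε hinner
  refine (((hasDerivAt_id ε).mul_const c).mul (hρ.const_add (y - 1))).congr_deriv ?_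
  simp only [id, Function.comp_def]
  ring

theorem rhat_one_eq_zero {x : ℝ} (hx : xF L lam ε y = x)
    (hfix : y - 1 + rhoP R rho (1 - x) = 0) : rhat L R lam rho ε 1 y = 0 := by
  rw [rhat_one, hx, hfix, mul_zero]

theorem Gf_one_eq {dc : ℕ} (hR : ∀ k ∈ R, 1 ≤ k) (hdc : dc ≠ 1) {x : ℝ} (hx : xF L lam ε y = x)
    (hx0 : x ≠ 0) (hfix : y - 1 + rhoP R rho (1 - x) = 0) :
    Gf L R lam rho ε dc 1 y = x * rhoD R rho (1 - x) := by
  rw [Gf_one hdc, rhat_two hR, rhat_one_eq_zero hx hfix, sub_zero, hx]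
  field_simp

noncomputable def delta11 (L R : Finset ℕ) (lam rho : ℕ → ℝ) (ε : ℝ) (dc : ℕ) (y : ℝ) : ℝ :=
  -(Ff L lam ε y) * ((xD L lam ε y / xF L lam ε y) * Gf L R lam rho ε dc 1 y - 1) ^ 2
    + Gf L R lam rho ε dc 1 y ^ 2 *
        (Fd L lam ε y * (xD L lam ε y / xF L lam ε y)
          - (∑ s ∈ L, ε ^ 2 * (s : ℝ) * lam s * y ^ (2 * s - 2)) + xF L lam ε y ^ 2)
    - Vf L R lam rho ε 1 1 y
    + 2 * Gf L R lam rho ε dc 1 y * (xF L lam ε y * (eF L lam ε y - xF L lam ε y)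
        - (Fd L lam ε y - xF L lam ε y) / 2)
    + rhat L R lam rho ε 1 y
    + (eF L lam ε y - xF L lam ε y) ^ 2

theorem delta11_eq_of_xD_mul_Gf {dc : ℕ} (hx : xF L lam ε y ≠ 0)
    (h : xD L lam ε y * Gf L R lam rho ε dc 1 y = xF L lam ε y) :
    delta11 L R lam rho ε dc y =
      Gf L R lam rho ε dc 1 y ^ 2 *
          (xF L lam ε y ^ 2 - ∑ s ∈ L, ε ^ 2 * (s : ℝ) * lam s * y ^ (2 * s - 2))
        - Vf L R lam rho ε 1 1 y
        + 2 * Gf L R lam rho ε dc 1 y * xF L lam ε y * (eF L lam ε y - xF L lam ε y)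
        + Gf L R lam rho ε dc 1 y * xF L lam ε y
        + rhat L R lam rho ε 1 y
        + (eF L lam ε y - xF L lam ε y) ^ 2 := by
  have h1 : xD L lam ε y / xF L lam ε y * Gf L R lam rho ε dc 1 y = 1 := by
    rw [div_mul_eq_mul_div, h, div_self hx]
  rw [delta11, h1]
  linear_combination Gf L R lam rho ε dc 1 y * Fd L lam ε y * h1

theorem delta11_eq_of_threshold {dc : ℕ} (hL : ∀ k ∈ L, 1 ≤ k) (hR : ∀ k ∈ R, 1 ≤ k)
    (hdc : dc ≠ 1) {x : ℝ} (hx : xF L lam ε y = x) (hx0 : x ≠ 0)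
    (hfix : y - 1 + rhoP R rho (1 - x) = 0) (htan : rhoD R rho (1 - x) * xD L lam ε y = 1) :
    delta11 L R lam rho ε dc y = (x * rhoD R rho (1 - x)) ^ 2 *
      ((rhoP R rho (1 - x) ^ 2 - rhoP R rho ((1 - x) ^ 2)
            - (1 - x) ^ 2 * rhoD R rho ((1 - x) ^ 2)) / rhoD R rho (1 - x) ^ 2
        + (1 - 2 * x * rhoP R rho (1 - x)) / rhoD R rho (1 - x)
        + x ^ 2 - ε ^ 2 * lamP L lam (y ^ 2) - ε ^ 2 * y ^ 2 * lamD L lam (y ^ 2)) := by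
  have hG := Gf_one_eq hR hdc hx hx0 hfix
  have hxG : xD L lam ε y * Gf L R lam rho ε dc 1 y = xF L lam ε y := by
    rw [hG, hx]
    linear_combination x * htan
  have he : eF L lam ε y - xF L lam ε y = -(x * rhoP R rho (1 - x)) := by
    rw [eF, hx]
    linear_combination x * hfix
  have hS : ∑ s ∈ L, ε ^ 2 * (s : ℝ) * lam s * y ^ (2 * s - 2)
      = ε ^ 2 * (lamP L lam (y ^ 2) + y ^ 2 * lamD L lam (y ^ 2)) := by
    rw [lamP_eq_rhoP, lamD_eq_rhoD, rhoP_sq_add_sq_mul_rhoD_sq hL, Finset.mul_sum]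
    simp only [mul_assoc]
  have hρ' : rhoD R rho (1 - x) ≠ 0 := left_ne_zero_of_mul_eq_one htan
  rw [delta11_eq_of_xD_mul_Gf (hx ▸ hx0) hxG, he, hG, rhat_one_eq_zero hx hfix, Vf_one_one hR,
    hS, hx]
  field_simp
  ring

theorem deriv_R1_eq_of_fixedPoint (hR : ∀ k ∈ R, 1 ≤ k) {c : ℝ}
    (hfix : y - 1 + rhoP R rho (1 - ε * c) = 0) :
    deriv (fun e : ℝ => e * c * (y - 1 + rhoP R rho (1 - e * c))) ε
      = -(ε * c * rhoD R rho (1 - ε * c)) * c := by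
  rw [(hasDerivAt_R1 hR c).deriv, hfix]
  ring

end Ensemble

theorem statement_17_general
    (L R : Finset ℕ) (hL : L.Nonempty) (hR : R.Nonempty)
    (hL2 : ∀ k ∈ L, 2 ≤ k) (hR2 : ∀ k ∈ R, 2 ≤ k)
    (lam rho : ℕ → ℝ)
    (hlamPos : ∀ k ∈ L, 0 < lam k)
    (dc : ℕ) (hdc : dc = R.max' hR)
    (εstar ystar : ℝ) (hε : εstar ∈ Set.Ioo (0 : ℝ) 1) (hy : ystar ∈ Set.Ioo (0 : ℝ) 1)
    (xs xt : ℝ) (hxs : xs = εstar * lamP L lam ystar) (hxt : xt = 1 - xs)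
    (hth1 : ystar = 1 - rhoP R rho xt)
    (hth2 : rhoD R rho xt * (εstar * lamD L lam ystar) = 1)
    (nxi : ℝ)
    (Δ B : ℝ)
    (hΔ : Δ =
      -(Ff L lam εstar ystar) * ((xD L lam εstar ystar / xF L lam εstar ystar) * Gf L R lam rho εstar dc 1 ystar - 1) ^ 2
      + Gf L R lam rho εstar dc 1 ystar ^ 2 *
          (Fd L lam εstar ystar * (xD L lam εstar ystar / xF L lam εstar ystar)
            - (∑ s ∈ L, εstar ^ 2 * (s : ℝ) * lam s * ystar ^ (2 * s - 2)) + xF L lam εstar ystar ^ 2)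
      - Vf L R lam rho εstar 1 1 ystar
      + 2 * Gf L R lam rho εstar dc 1 ystar * (xF L lam εstar ystar * (eF L lam εstar ystar - xF L lam εstar ystar) - (Fd L lam εstar ystar - xF L lam εstar ystar) / 2)
      + rhat L R lam rho εstar 1 ystar
      + (eF L lam εstar ystar - xF L lam εstar ystar) ^ 2)
    (hB : B =
      (rhoP R rho xt ^ 2 - rhoP R rho (xt ^ 2) - xt ^ 2 * rhoD R rho (xt ^ 2)) /
          rhoD R rho xt ^ 2
        + (1 - 2 * xs * rhoP R rho xt) / rhoD R rho xt
        + xs ^ 2 - εstar ^ 2 * lamP L lam (ystar ^ 2)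
        - εstar ^ 2 * ystar ^ 2 * lamD L lam (ystar ^ 2)) :
    Δ = (xs * rhoD R rho xt) ^ 2 * B
    ∧ Real.sqrt nxi * Real.sqrt Δ /
        |deriv (fun e : ℝ =>
          e * lamP L lam ystar * (ystar - 1 + rhoP R rho (1 - e * lamP L lam ystar))) εstar| =
      Real.sqrt nxi * Real.sqrt B / lamP L lam ystar := by
  subst hxt
  have hL1 : ∀ k ∈ L, 1 ≤ k := fun k hk => one_le_two.trans (hL2 k hk)
  have hR1 : ∀ k ∈ R, 1 ≤ k := fun k hk => one_le_two.trans (hR2 k hk)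
  have hc : 0 < lamP L lam ystar := by rw [lamP_eq_rhoP]; exact rhoP_pos hL hlamPos hy.1
  have hxs0 : xs ≠ 0 := by rw [hxs]; exact (mul_pos hε.1 hc).ne'
  have hρ' : rhoD R rho (1 - xs) ≠ 0 := left_ne_zero_of_mul_eq_one hth2
  have hfix : ystar - 1 + rhoP R rho (1 - xs) = 0 := by linarith
  have hdc1 : dc ≠ 1 := by have := hR2 dc (hdc ▸ R.max'_mem hR); omega
  have hΔB : Δ = (xs * rhoD R rho (1 - xs)) ^ 2 * B := by
    rw [hB]
    exact hΔ.trans (delta11_eq_of_threshold hL1 hR1 hdc1 hxs.symm hxs0 hfix hth2)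
  have hderiv := deriv_R1_eq_of_fixedPoint (ε := εstar) (c := lamP L lam ystar) hR1
    (by rwa [← hxs])
  rw [← hxs] at hderiv
  have hxρ : |xs * rhoD R rho (1 - xs)| ≠ 0 := abs_ne_zero.mpr (mul_ne_zero hxs0 hρ')
  refine ⟨hΔB, ?_⟩
  rw [hderiv, hΔB, Real.sqrt_mul (sq_nonneg _), Real.sqrt_sq_eq_abs, abs_mul (-_), abs_neg,
    abs_of_pos hc]
  field_simp

theorem statement_17
    (L R : Finset ℕ) (hL : L.Nonempty) (hR : R.Nonempty)
    (hL2 : ∀ k ∈ L, 2 ≤ k) (hR2 : ∀ k ∈ R, 2 ≤ k)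
    (lam rho : ℕ → ℝ)
    (hlamPos : ∀ k ∈ L, 0 < lam k) (hlamSum : ∑ k ∈ L, lam k = 1)
    (hrhoPos : ∀ k ∈ R, 0 < rho k) (hrhoSum : ∑ k ∈ R, rho k = 1)
    (dc : ℕ) (hdc : dc = R.max' hR)
    (εstar ystar : ℝ) (hε : εstar ∈ Set.Ioo (0 : ℝ) 1) (hy : ystar ∈ Set.Ioo (0 : ℝ) 1)
    (xs xt : ℝ) (hxs : xs = εstar * lamP L lam ystar) (hxt : xt = 1 - xs)
    (hth1 : ystar = 1 - rhoP R rho xt)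
    (hth2 : rhoD R rho xt * (εstar * lamD L lam ystar) = 1)
    (nxi : ℝ) (hnxi : 0 < nxi)
    (Δ B : ℝ)
    (hΔ : Δ =
      -(Ff L lam εstar ystar) * ((xD L lam εstar ystar / xF L lam εstar ystar) * Gf L R lam rho εstar dc 1 ystar - 1) ^ 2
      + Gf L R lam rho εstar dc 1 ystar ^ 2 *
          (Fd L lam εstar ystar * (xD L lam εstar ystar / xF L lam εstar ystar)
            - (∑ s ∈ L, εstar ^ 2 * (s : ℝ) * lam s * ystar ^ (2 * s - 2)) + xF L lam εstar ystar ^ 2)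
      - Vf L R lam rho εstar 1 1 ystar
      + 2 * Gf L R lam rho εstar dc 1 ystar * (xF L lam εstar ystar * (eF L lam εstar ystar - xF L lam εstar ystar) - (Fd L lam εstar ystar - xF L lam εstar ystar) / 2)
      + rhat L R lam rho εstar 1 ystar
      + (eF L lam εstar ystar - xF L lam εstar ystar) ^ 2)
    (hB : B =
      (rhoP R rho xt ^ 2 - rhoP R rho (xt ^ 2) - xt ^ 2 * rhoD R rho (xt ^ 2)) /
          rhoD R rho xt ^ 2
        + (1 - 2 * xs * rhoP R rho xt) / rhoD R rho xt
        + xs ^ 2 - εstar ^ 2 * lamP L lam (ystar ^ 2)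
        - εstar ^ 2 * ystar ^ 2 * lamD L lam (ystar ^ 2)) :
    Δ = (xs * rhoD R rho xt) ^ 2 * B
    ∧ Real.sqrt nxi * Real.sqrt Δ /
        |deriv (fun e : ℝ =>
          e * lamP L lam ystar * (ystar - 1 + rhoP R rho (1 - e * lamP L lam ystar))) εstar| =
      Real.sqrt nxi * Real.sqrt B / lamP L lam ystar :=
  statement_17_general L R hL hR hL2 hR2 lam rho hlamPos dc hdc εstar ystar hε hy xs xt hxs hxt hth1
    hth2 nxi Δ B hΔ hB

end LDPC
end

section
/- For the (d_v, d_c)-regular ensemble, i.e. λ(y) = y^{d_v−1} and ρ(z) = z^{d_c−1} with integers d_v, d_c ≥ 2, under the threshold conditions y* = 1 − (1 − x*)^{d_c−1} and (d_c−1)(1−x*)^{d_c−2} · ε*(d_v−1) y*^{d_v−2} = 1 with x* = ε* y*^{d_v−1}, one has B/(d_v · λ(y*)²) = ε*² · ((d_v−1)/d_v) · (1/x* − 1/y*), where B := [ρ(x̃*)² − ρ(x̃*²) − x̃*² ρ'(x̃*²)]/ρ'(x̃*)² + [1 − 2x* ρ(x̃*)]/ρ'(x̃*) + x*² − ε*²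 λ(y*²) − ε*² y*² λ'(y*²) and x̃* := 1 − x*. Equivalently, the slope scaling parameter of Corollary 1 with n/ξ = 1/d_v equals α = ε* √(((d_v−1)/d_v)(1/x* − 1/y*)). (Remark after Corollary 1.) -/
open Finset

namespace LDPC

/-!
For the regular ensemble `ρ(x̃)² = ρ(x̃²)`, so the first bracket of `B` is `-x̃²/(d_c-1)`, and the
variable terms collapse to `-(d_v-1)x²`. The threshold conditions `ρ(x̃) = 1 - y` and
`1/ρ'(x̃) = ελ'(y) = (d_v-1)x/y` then reduce `B` to `(d_v-1)x(y-x)/y`; dividing by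
`d_v λ(y)² = d_v x²/ε²` gives the first identity, and the second is its square root.
-/

/-- The paper's `B` for `λ(y) = y^(dv-1)`, `ρ(z) = z^(dc-1)`, with `x = ελ(y)` and `t = x̃ = 1 - x`. -/
noncomputable def regularB (dv dc : ℕ) (ε y x t : ℝ) : ℝ :=
  ((t ^ (dc - 1)) ^ 2 - (t ^ 2) ^ (dc - 1) - t ^ 2 * (((dc : ℝ) - 1) * (t ^ 2) ^ (dc - 2))) /
      (((dc : ℝ) - 1) * t ^ (dc - 2)) ^ 2
    + (1 - 2 * x * t ^ (dc - 1)) / (((dc : ℝ) - 1) * t ^ (dc - 2))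
    + x ^ 2 - ε ^ 2 * (y ^ 2) ^ (dv - 1)
    - ε ^ 2 * y ^ 2 * (((dv : ℝ) - 1) * (y ^ 2) ^ (dv - 2))

lemma regular_check_terms_eq (x t : ℝ) (k : ℕ) (htk : t ^ k ≠ 0) :
    ((t ^ (k + 1)) ^ 2 - (t ^ 2) ^ (k + 1) - t ^ 2 * (((k : ℝ) + 1) * (t ^ 2) ^ k)) /
        (((k : ℝ) + 1) * t ^ k) ^ 2
      + (1 - 2 * x * t ^ (k + 1)) / (((k : ℝ) + 1) * t ^ k)
      = (1 - (t + 2 * x) * t ^ (k + 1)) / (((k : ℝ) + 1) * t ^ k) := by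
  field_simp
  ring

lemma regular_variable_terms_eq (ε y : ℝ) (k : ℕ) :
    (ε * y ^ (k + 1)) ^ 2 - ε ^ 2 * (y ^ 2) ^ (k + 1)
        - ε ^ 2 * y ^ 2 * (((k : ℝ) + 1) * (y ^ 2) ^ k)
      = -((k : ℝ) + 1) * (ε * y ^ (k + 1)) ^ 2 := by
  ring

lemma regularB_eq_of_threshold (dv dc : ℕ) (hdv : 2 ≤ dv) (hdc : 2 ≤ dc) (ε y x t : ℝ)
    (hy : y ≠ 0) (hx : x = ε * y ^ (dv - 1)) (ht : t = 1 - x) (h1 : y = 1 - t ^ (dc - 1))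
    (h2 : ((dc : ℝ) - 1) * t ^ (dc - 2) * (ε * (((dv : ℝ) - 1) * y ^ (dv - 2))) = 1) :
    regularB dv dc ε y x t = ((dv : ℝ) - 1) * x * (y - x) / y := by
  obtain ⟨m, rfl⟩ : ∃ m, dv = m + 2 := ⟨dv - 2, by omega⟩
  obtain ⟨n, rfl⟩ : ∃ n, dc = n + 2 := ⟨dc - 2, by omega⟩
  simp only [regularB, Nat.add_sub_cancel, Nat.add_succ_sub_one, Nat.cast_add,
    Nat.cast_ofNat, add_sub_assoc, show (2 : ℝ) - 1 = 1 by norm_num] at *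
  have htn : t ^ n ≠ 0 := by
    rintro h
    simp [h] at h2
  -- the threshold condition `ρ'(x̃) ελ'(y) = 1`, with `ελ'(y) = (dv - 1) x / y`
  have hρ' : 1 / (((n : ℝ) + 1) * t ^ n) = ((m : ℝ) + 1) * x / y := by
    rw [div_eq_div_iff (mul_ne_zero (by positivity) htn) hy]
    linear_combination (-y) * h2 - (m + 1) * (n + 1) * t ^ n * hx
  rw [regular_check_terms_eq x t n htn, hx, regular_variable_terms_eq, ← hx, div_eq_mul_one_div,
    hρ', show (t + 2 * x) * t ^ (n + 1) = (1 + x) * (1 - y) by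
      linear_combination t ^ (n + 1) * ht + (1 + x) * h1]
  field_simp
  ring

lemma div_mul_sq_eq_of_eq_mul_sub_div (d ε x y L B : ℝ) (hd : d ≠ 0) (hx : x ≠ 0)
    (hy : y ≠ 0) (hxL : x = ε * L) (hB : B = (d - 1) * x * (y - x) / y) :
    B / (d * L ^ 2) = ε ^ 2 * ((d - 1) / d) * (1 / x - 1 / y) := by
  obtain ⟨hε, hL⟩ := mul_ne_zero_iff.mp (hxL ▸ hx)
  subst hB hxL
  field_simp

lemma sqrt_one_div_mul_sqrt_div_eq (d ε L T B : ℝ) (hd : 0 < d) (hε : 0 ≤ ε) (hL : 0 < L)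
    (h : B / (d * L ^ 2) = ε ^ 2 * T) :
    √(1 / d) * √B / L = ε * √T := by
  have hB : B = d * (ε * L) ^ 2 * T := by
    rw [div_eq_iff (by positivity)] at h
    linear_combination h
  rw [hB, Real.sqrt_mul (by positivity), Real.sqrt_mul hd.le, Real.sqrt_sq (by positivity),
    ← mul_assoc, ← mul_assoc, ← Real.sqrt_mul (by positivity), one_div_mul_cancel hd.ne',
    Real.sqrt_one]
  field_simp

theorem statement_18
    (dv dc : ℕ) (hdv : 2 ≤ dv) (hdc : 2 ≤ dc)
    (εs ys : ℝ) (hε : εs ∈ Set.Ioo (0 : ℝ) 1) (hy : ys ∈ Set.Ioo (0 : ℝ) 1)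
    (xs xt : ℝ) (hxs : xs = εs * ys ^ (dv - 1)) (hxt : xt = 1 - xs)
    (hth1 : ys = 1 - xt ^ (dc - 1))
    (hth2 : ((dc : ℝ) - 1) * xt ^ (dc - 2) * (εs * (((dv : ℝ) - 1) * ys ^ (dv - 2))) = 1)
    (B : ℝ)
    (hB : B =
      ((xt ^ (dc - 1)) ^ 2 - (xt ^ 2) ^ (dc - 1)
          - xt ^ 2 * (((dc : ℝ) - 1) * (xt ^ 2) ^ (dc - 2))) /
          (((dc : ℝ) - 1) * xt ^ (dc - 2)) ^ 2
        + (1 - 2 * xs * xt ^ (dc - 1)) / (((dc : ℝ) - 1) * xt ^ (dc - 2))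
        + xs ^ 2 - εs ^ 2 * (ys ^ 2) ^ (dv - 1)
        - εs ^ 2 * ys ^ 2 * (((dv : ℝ) - 1) * (ys ^ 2) ^ (dv - 2))) :
    B / ((dv : ℝ) * (ys ^ (dv - 1)) ^ 2) =
      εs ^ 2 * (((dv : ℝ) - 1) / (dv : ℝ)) * (1 / xs - 1 / ys)
    ∧ Real.sqrt (1 / (dv : ℝ)) * Real.sqrt B / ys ^ (dv - 1) =
      εs * Real.sqrt ((((dv : ℝ) - 1) / (dv : ℝ)) * (1 / xs - 1 / ys)) := by
  obtain ⟨hε0, -⟩ := hε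
  obtain ⟨hy0, -⟩ := hy
  have hL : 0 < ys ^ (dv - 1) := by positivity
  have hx0 : xs ≠ 0 := by rw [hxs]; positivity
  have hBv : B = ((dv : ℝ) - 1) * xs * (ys - xs) / ys := by
    rw [hB]
    exact regularB_eq_of_threshold dv dc hdv hdc εs ys xs xt hy0.ne' hxs hxt hth1 hth2
  have hscaled :=
    div_mul_sq_eq_of_eq_mul_sub_div dv εs xs ys _ B (by positivity) hx0 hy0.ne' hxs hBv
  exact ⟨hscaled, sqrt_one_div_mul_sqrt_div_eq dv εs _ _ B (by positivity) hε0.le hL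
    (by rw [hscaled, mul_assoc])⟩

end LDPC
end
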